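/- Fix a DMC W, R ≥ 0, erasure exponent x ≥ 0, input distribution P with α·E_r(R/α, P) ≥ x, and joint second-phase type λ. Define E(R, x, α, P, λ) for α E_r(R/α,P) ≥ x as the minimum over (R″, R′, T) with R″ ≥ R′ ≥ R, T ≥ 0, and α·E_sp(R″/α, P) + R′ − R + T ≤ x, of α·E_sp(R′/α, P) + R″ − R + (1−α)·h(T/(1−α), λ). Then for fixed (R, x, P, λ), the function α ↦ E(R, x, α, P, λ) is convex on the interval [α*, 1], where α* is the unique solution of α E_r(R/α, P) = x. -/

import Mathlib

open scoped BigOperators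

noncomputable section

variable {X Y : Type} [Fintype X] [Fintype Y]

/-- Conditional Kullback-Leibler divergence `D(V‖W|P)`. -/
def condKL {X Y : Type} [Fintype X] [Fintype Y]
    (P : X → ℝ) (V W : X → Y → ℝ) : ℝ :=
  ∑ a, P a * ∑ b, V a b * Real.log (V a b / W a b)

/-- Mutual information `I(P,V)`. -/
def mutInf {X Y : Type} [Fintype X] [Fintype Y]
    (P : X → ℝ) (V : X → Y → ℝ) : ℝ :=
  ∑ a, ∑ b, P a * V a b * Real.log (V a b / ∑ a', P a' * V a' b)

/-- A stochastic matrix. -/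
def IsChannel {X Y : Type} [Fintype X] [Fintype Y] (V : X → Y → ℝ) : Prop :=
  (∀ a b, 0 ≤ V a b) ∧ (∀ a, ∑ b, V a b = 1)

/-- Sphere packing exponent `E_sp(R,P)`. -/
def EspP (W : X → Y → ℝ) (P : X → ℝ) (R : ℝ) : ℝ :=
  sInf {d | ∃ V : X → Y → ℝ, IsChannel V ∧ mutInf P V ≤ R ∧ d = condKL P V W}

/-- Random coding exponent `E_r(R,P)`. -/
def ErP (W : X → Y → ℝ) (P : X → ℝ) (R : ℝ) : ℝ :=
  sInf {d | ∃ V : X → Y → ℝ, IsChannel V ∧ d = condKL P V W + max (mutInf P V - R) 0}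

/-- `W_a(y|x₁,x₂) = W(y|x₁)`. -/
def Wacc (W : X → Y → ℝ) : X × X → Y → ℝ := fun p y => W p.1 y

/-- `W_r(y|x₁,x₂) = W(y|x₂)`. -/
def Wrej (W : X → Y → ℝ) : X × X → Y → ℝ := fun p y => W p.2 y

/-- `h(T,λ) = min { D(U‖W_r|λ) : D(U‖W_a|λ) ≤ T }`. -/
def hTwo (W : X → Y → ℝ) (lam : X × X → ℝ) (T : ℝ) : ℝ :=
  sInf {d | ∃ U : X × X → Y → ℝ, IsChannel U ∧
    condKL lam U (Wacc W) ≤ T ∧ d = condKL lam U (Wrej W)}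

/-- The exponent `E(R,x,α,P,λ)` of the two-phase scheme:
minimum of `α·E_sp(R′/α,P) + R″ − R + (1−α)·h(T/(1−α),λ)` over
`R″ ≥ R′ ≥ R`, `T ≥ 0` with `α·E_sp(R″/α,P) + R′ − R + T ≤ x`. -/
def Efun (W : X → Y → ℝ) (lam : X × X → ℝ) (P : X → ℝ) (R x α : ℝ) : ℝ :=
  sInf {v | ∃ R'' R' T : ℝ, R ≤ R' ∧ R' ≤ R'' ∧ 0 ≤ T ∧
    α * EspP W P (R'' / α) + R' - R + T ≤ x ∧
    v = α * EspP W P (R' / α) + R'' - R + (1 - α) * hTwo W lam (T / (1 - α))}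

end

/-!
Minimising a jointly convex function over part of its variables leaves a convex function, so
it suffices that the feasible set of `(α, R″, R′, T)` is convex and the objective is jointly
convex on it. Both follow from perspectives: `E_sp(·, P)` and `h(·, λ)` are value functions
`ρ ↦ inf {D(V) : I(V) ≤ ρ}` of convex programs (conditional divergence and mutual information
are convex in the channel), hence convex and non-increasing, which makes
`(α, r) ↦ α E_sp(r/α, P)` and `(δ, T) ↦ δ h(T/δ, λ)` jointly convex, also at `δ = 1 - α = 0`.
-/

open Set Real

theorem ConvexOn.perspective {g : ℝ → ℝ} (hg : ConvexOn ℝ (Ici 0) g) :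
    ConvexOn ℝ (Ioi 0 ×ˢ Ici 0) fun p : ℝ × ℝ => p.1 * g (p.2 / p.1) := by
  refine ⟨(convex_Ioi 0).prod (convex_Ici 0), ?_⟩
  rintro ⟨α₁, r₁⟩ ⟨hα₁, hr₁⟩ ⟨α₂, r₂⟩ ⟨hα₂, hr₂⟩ a b ha hb hab
  simp only [mem_Ioi, mem_Ici] at hα₁ hr₁ hα₂ hr₂
  simp only [Prod.smul_mk, Prod.mk_add_mk, smul_eq_mul]
  have hc : 0 < a * α₁ + b * α₂ := by
    rcases ha.eq_or_lt with rfl | ha'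
    · simp only [zero_add] at hab; subst hab; simpa using hα₂
    · positivity
  have key := hg.2 (div_nonneg hr₁ hα₁.le) (div_nonneg hr₂ hα₂.le)
    (div_nonneg (mul_nonneg ha hα₁.le) hc.le) (div_nonneg (mul_nonneg hb hα₂.le) hc.le)
    (by field_simp)
  simp only [smul_eq_mul] at key
  calc (a * α₁ + b * α₂) * g ((a * r₁ + b * r₂) / (a * α₁ + b * α₂))
      = (a * α₁ + b * α₂) * g (a * α₁ / (a * α₁ + b * α₂) * (r₁ / α₁) +
          b * α₂ / (a * α₁ + b * α₂) * (r₂ / α₂)) := by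
        congr 2; field_simp
    _ ≤ (a * α₁ + b * α₂) * (a * α₁ / (a * α₁ + b * α₂) * g (r₁ / α₁) +
          b * α₂ / (a * α₁ + b * α₂) * g (r₂ / α₂)) := mul_le_mul_of_nonneg_left key hc.le
    _ = a * (α₁ * g (r₁ / α₁)) + b * (α₂ * g (r₂ / α₂)) := by field_simp

theorem ConvexOn.perspective_of_antitoneOn {g : ℝ → ℝ} (hg : ConvexOn ℝ (Ici 0) g)
    (hg' : AntitoneOn g (Ici 0)) :
    ConvexOn ℝ (Ici 0 ×ˢ Ici 0) fun p : ℝ × ℝ => p.1 * g (p.2 / p.1) := by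
  refine ⟨(convex_Ici 0).prod (convex_Ici 0), ?_⟩
  rintro ⟨α₁, r₁⟩ ⟨hα₁, hr₁⟩ ⟨α₂, r₂⟩ ⟨hα₂, hr₂⟩ a b ha hb hab
  simp only [mem_Ici] at hα₁ hr₁ hα₂ hr₂
  simp only [Prod.smul_mk, Prod.mk_add_mk, smul_eq_mul]
  have h₁ : 0 ≤ a * α₁ := mul_nonneg ha hα₁
  have h₂ : 0 ≤ b * α₂ := mul_nonneg hb hα₂
  rcases (add_nonneg h₁ h₂).eq_or_lt with hc | hc
  · have e₁ : a * α₁ = 0 := by linarith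
    have e₂ : b * α₂ = 0 := by linarith
    rw [← hc, ← mul_assoc, ← mul_assoc, e₁, e₂]; simp
  -- an endpoint with `α = 0` only enlarges the argument of `g`, which `g` being antitone absorbs
  have hdiv : ∀ {α r : ℝ}, 0 ≤ r → α * (r / α) ≤ r := fun {α r} hr => by
    rcases eq_or_ne α 0 with rfl | hα
    · simpa using hr
    · rw [mul_div_cancel₀ _ hα]
  set c := a * α₁ + b * α₂
  have hρ : a * α₁ / c * (r₁ / α₁) + b * α₂ / c * (r₂ / α₂) ≤ (a * r₁ + b * r₂) / c := by
    calc a * α₁ / c * (r₁ / α₁) + b * α₂ / c * (r₂ / α₂)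
        = (a * (α₁ * (r₁ / α₁)) + b * (α₂ * (r₂ / α₂))) / c := by ring
      _ ≤ (a * r₁ + b * r₂) / c := by gcongr; exacts [hdiv hr₁, hdiv hr₂]
  have key := hg.2 (div_nonneg hr₁ hα₁) (div_nonneg hr₂ hα₂)
    (div_nonneg h₁ hc.le) (div_nonneg h₂ hc.le) (by rw [← add_div, div_self hc.ne'])
  simp only [smul_eq_mul] at key
  calc c * g ((a * r₁ + b * r₂) / c)
      ≤ c * g (a * α₁ / c * (r₁ / α₁) + b * α₂ / c * (r₂ / α₂)) := by
        gcongr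
        refine hg' ?_ ?_ hρ <;> simp only [mem_Ici] <;> positivity
    _ ≤ c * (a * α₁ / c * g (r₁ / α₁) + b * α₂ / c * g (r₂ / α₂)) :=
        mul_le_mul_of_nonneg_left key hc.le
    _ = a * (α₁ * g (r₁ / α₁)) + b * (α₂ * g (r₂ / α₂)) := by field_simp

theorem mul_log_div_add_le {a b v₁ v₂ m₁ m₂ : ℝ} (ha : 0 ≤ a) (hb : 0 ≤ b) (hab : a + b = 1)
    (hv₁ : 0 ≤ v₁) (hv₂ : 0 ≤ v₂) (hm₁ : 0 ≤ m₁) (hm₂ : 0 ≤ m₂)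
    (h₁ : m₁ = 0 → v₁ = 0) (h₂ : m₂ = 0 → v₂ = 0) :
    (a * v₁ + b * v₂) * log ((a * v₁ + b * v₂) / (a * m₁ + b * m₂)) ≤
      a * (v₁ * log (v₁ / m₁)) + b * (v₂ * log (v₂ / m₂)) := by
  have hscale : ∀ {c v m : ℝ}, c * v * log (c * v / (c * m)) = c * (v * log (v / m)) :=
    fun {c v m} => by
      rcases eq_or_ne c 0 with rfl | hc
      · simp
      · rw [mul_div_mul_left _ _ hc, mul_assoc]
  rcases hm₁.eq_or_lt with rfl | hm₁
  · simp [h₁ rfl, hscale]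
  rcases hm₂.eq_or_lt with rfl | hm₂
  · simp [h₂ rfl, hscale]
  have hc : 0 < a * m₁ + b * m₂ := by
    rcases ha.eq_or_lt with rfl | ha'
    · simp only [zero_add] at hab; subst hab; simpa using hm₂
    · positivity
  have hpersp : ∀ {v m : ℝ}, 0 < m → m * (v / m * log (v / m)) = v * log (v / m) :=
    fun hm => by field_simp
  have key := convexOn_mul_log.perspective.2 (x := (m₁, v₁)) ⟨hm₁, hv₁⟩ (y := (m₂, v₂))
    ⟨hm₂, hv₂⟩ ha hb hab
  simp only [Prod.smul_mk, Prod.mk_add_mk, smul_eq_mul] at key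
  rwa [hpersp hc, hpersp hm₁, hpersp hm₂] at key

theorem convexOn_mul_log_div (w : ℝ) : ConvexOn ℝ (Ici 0) fun v => v * log (v / w) := by
  rcases eq_or_ne w 0 with rfl | hw
  · simpa using convexOn_const (0 : ℝ) (convex_Ici 0)
  refine (convexOn_mul_log.add ((LinearMap.mulLeft ℝ (-log w)).convexOn (convex_Ici 0))).congr
    fun v _ => ?_
  rcases eq_or_ne v 0 with rfl | hv
  · simp
  · simp [log_div hv hw]; ring

theorem neg_le_mul_log_div {v w : ℝ} (hv : 0 ≤ v) (hw : 0 ≤ w) : -w ≤ v * log (v / w) := by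
  rcases hv.eq_or_lt with rfl | hv
  · simpa using hw
  rcases hw.eq_or_lt with rfl | hw
  · simp
  have := one_sub_inv_le_log_of_pos (div_pos hv hw)
  calc -w ≤ v * (1 - (v / w)⁻¹) := by rw [inv_div, mul_sub, mul_div_cancel₀ _ hv.ne']; linarith
    _ ≤ v * log (v / w) := by gcongr

section Channels

variable {X Y : Type} [Fintype X] [Fintype Y]

theorem convex_isChannel : Convex ℝ {V : X → Y → ℝ | IsChannel V} := by
  intro V₁ h₁ V₂ h₂ a b ha hb hab
  refine ⟨fun x y => ?_, fun x => ?_⟩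
  · have := h₁.1 x y; have := h₂.1 x y
    simp only [Pi.add_apply, Pi.smul_apply, smul_eq_mul]; positivity
  · simp [Finset.sum_add_distrib, ← Finset.mul_sum, h₁.2, h₂.2, hab]

theorem IsChannel.nonneg {V : X → Y → ℝ} (hV : IsChannel V) : 0 ≤ V := fun x y => hV.1 x y

theorem condKL_self (P : X → ℝ) (V : X → Y → ℝ) : condKL P V V = 0 := by
  refine Finset.sum_eq_zero fun x _ => ?_
  rw [Finset.sum_eq_zero fun y _ => ?_, mul_zero]
  rcases eq_or_ne (V x y) 0 with h | h <;> simp [h]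

theorem mutInf_const {P : X → ℝ} (hP : ∑ x, P x = 1) (q : Y → ℝ) :
    mutInf P (fun _ => q) = 0 := by
  refine Finset.sum_eq_zero fun x _ => Finset.sum_eq_zero fun y _ => ?_
  rw [← Finset.sum_mul, hP, one_mul]
  rcases eq_or_ne (q y) 0 with h | h <;> simp [h]

theorem neg_sum_le_condKL {P : X → ℝ} (hP : ∀ x, 0 ≤ P x) {V W : X → Y → ℝ} (hV : 0 ≤ V)
    (hW : IsChannel W) : -∑ x, P x ≤ condKL P V W := by
  rw [← Finset.sum_neg_distrib]
  refine Finset.sum_le_sum fun x _ => ?_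
  calc -P x = P x * ∑ y, -W x y := by rw [Finset.sum_neg_distrib, hW.2 x]; ring
    _ ≤ P x * ∑ y, V x y * log (V x y / W x y) :=
      mul_le_mul_of_nonneg_left
        (Finset.sum_le_sum fun y _ => neg_le_mul_log_div (hV x y) (hW.1 x y)) (hP x)

theorem bddBelow_condKL_image {P : X → ℝ} (hP : ∀ x, 0 ≤ P x) {W : X → Y → ℝ}
    (hW : IsChannel W) : BddBelow ((fun V => condKL P V W) '' {V | IsChannel V}) :=
  ⟨-∑ x, P x, by rintro _ ⟨V, hV, rfl⟩; exact neg_sum_le_condKL hP hV.nonneg hW⟩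

theorem convexOn_condKL {P : X → ℝ} (hP : ∀ x, 0 ≤ P x) (W : X → Y → ℝ) :
    ConvexOn ℝ (Ici 0) fun V => condKL P V W := by
  refine ⟨convex_Ici 0, fun V₁ hV₁ V₂ hV₂ a b ha hb hab => ?_⟩
  calc condKL P (a • V₁ + b • V₂) W
      ≤ ∑ x, P x * ∑ y, (a * (V₁ x y * log (V₁ x y / W x y)) +
          b * (V₂ x y * log (V₂ x y / W x y))) :=
        Finset.sum_le_sum fun x _ => mul_le_mul_of_nonneg_left (Finset.sum_le_sum fun y _ =>
          (convexOn_mul_log_div (W x y)).2 (hV₁ x y) (hV₂ x y) ha hb hab) (hP x)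
    _ = a • condKL P V₁ W + b • condKL P V₂ W := by
      simp only [condKL, smul_eq_mul, Finset.mul_sum, ← Finset.sum_add_distrib]
      exact Finset.sum_congr rfl fun x _ => Finset.sum_congr rfl fun y _ => by ring

theorem convexOn_mutInf {P : X → ℝ} (hP : ∀ x, 0 ≤ P x) :
    ConvexOn ℝ (Ici 0) (mutInf (Y := Y) P) := by
  refine ⟨convex_Ici 0, fun V₁ hV₁ V₂ hV₂ a b ha hb hab => ?_⟩
  have hV₁ : 0 ≤ V₁ := hV₁
  have hV₂ : 0 ≤ V₂ := hV₂
  simp only [mutInf, smul_eq_mul, Finset.mul_sum, ← Finset.sum_add_distrib]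
  refine Finset.sum_le_sum fun x _ => Finset.sum_le_sum fun y _ => ?_
  have hmarg : ∑ x', P x' * (a • V₁ + b • V₂) x' y =
      a * ∑ x', P x' * V₁ x' y + b * ∑ x', P x' * V₂ x' y := by
    rw [Finset.mul_sum, Finset.mul_sum, ← Finset.sum_add_distrib]
    exact Finset.sum_congr rfl fun x' _ => by
      simp only [Pi.add_apply, Pi.smul_apply, smul_eq_mul]; ring
  rw [hmarg]
  rcases (hP x).eq_or_lt with h | hPx
  · simp [← h]
  -- an output with zero marginal under `V` receives no mass from the input `x`
  have hsupp : ∀ {V : X → Y → ℝ}, 0 ≤ V → ∑ x', P x' * V x' y = 0 → V x y = 0 := by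
    intro V hV h0
    have := Finset.single_le_sum (fun x' _ => mul_nonneg (hP x') (hV x' y)) (Finset.mem_univ x)
    rw [h0] at this
    exact (mul_eq_zero.1 (this.antisymm (mul_nonneg hPx.le (hV x y)))).resolve_left hPx.ne'
  have key := mul_log_div_add_le ha hb hab (hV₁ x y) (hV₂ x y)
    (Finset.sum_nonneg fun x' _ => mul_nonneg (hP x') (hV₁ x' y))
    (Finset.sum_nonneg fun x' _ => mul_nonneg (hP x') (hV₂ x' y)) (hsupp hV₁) (hsupp hV₂)
  calc P x * (a • V₁ + b • V₂) x y * log ((a • V₁ + b • V₂) x y /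
        (a * ∑ x', P x' * V₁ x' y + b * ∑ x', P x' * V₂ x' y))
      ≤ P x * (a * (V₁ x y * log (V₁ x y / ∑ x', P x' * V₁ x' y)) +
          b * (V₂ x y * log (V₂ x y / ∑ x', P x' * V₂ x' y))) := by
        rw [mul_assoc]; exact mul_le_mul_of_nonneg_left key hPx.le
    _ = _ := by ring

end Channels

section PartialMinimization

variable {E F : Type*} [AddCommGroup E] [Module ℝ E] [AddCommGroup F] [Module ℝ F]

theorem ConvexOn.sInf_fiber {C : Set (E × F)} {f : E × F → ℝ} (hf : ConvexOn ℝ C f)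
    {s : Set E} (hs : Convex ℝ s) (hne : ∀ x ∈ s, ∃ y, (x, y) ∈ C)
    (hbdd : ∀ x ∈ s, BddBelow {v | ∃ y, (x, y) ∈ C ∧ v = f (x, y)}) :
    ConvexOn ℝ s fun x => sInf {v | ∃ y, (x, y) ∈ C ∧ v = f (x, y)} := by
  set fiber := fun x => {v | ∃ y, (x, y) ∈ C ∧ v = f (x, y)}
  set g := fun x => sInf (fiber x)
  refine ⟨hs, fun x₁ hx₁ x₂ hx₂ a b ha hb hab => le_of_forall_pos_le_add fun ε hε => ?_⟩
  have hnear : ∀ x ∈ s, ∃ y, (x, y) ∈ C ∧ f (x, y) ≤ g x + ε := fun x hx => by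
    obtain ⟨y, hy⟩ := hne x hx
    obtain ⟨_, ⟨y', hy', rfl⟩, hlt⟩ := Real.lt_sInf_add_pos (s := fiber x) ⟨_, y, hy, rfl⟩ hε
    exact ⟨y', hy', hlt.le⟩
  obtain ⟨y₁, hC₁, hf₁⟩ := hnear x₁ hx₁
  obtain ⟨y₂, hC₂, hf₂⟩ := hnear x₂ hx₂
  calc g (a • x₁ + b • x₂) ≤ f (a • (x₁, y₁) + b • (x₂, y₂)) :=
        csInf_le (hbdd _ (hs hx₁ hx₂ ha hb hab)) ⟨a • y₁ + b • y₂, hf.1 hC₁ hC₂ ha hb hab, rfl⟩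
    _ ≤ a • f (x₁, y₁) + b • f (x₂, y₂) := hf.2 hC₁ hC₂ ha hb hab
    _ ≤ a • (g x₁ + ε) + b • (g x₂ + ε) := by gcongr
    _ = a • g x₁ + b • g x₂ + ε := by
      simp only [smul_eq_mul]; linear_combination ε * hab

end PartialMinimization

section ConstrainedInf

variable {F : Type*} {S : Set F} {D I : F → ℝ}

noncomputable def constrainedInf (S : Set F) (D I : F → ℝ) (ρ : ℝ) : ℝ :=
  sInf {d | ∃ V, V ∈ S ∧ I V ≤ ρ ∧ d = D V}

theorem bddBelow_constrainedInf_set (hbdd : BddBelow (D '' S)) (ρ : ℝ) :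
    BddBelow {d | ∃ V, V ∈ S ∧ I V ≤ ρ ∧ d = D V} :=
  hbdd.mono <| by rintro _ ⟨V, hV, -, rfl⟩; exact ⟨V, hV, rfl⟩

theorem constrainedInf_le (hbdd : BddBelow (D '' S)) {V : F} (hV : V ∈ S) {ρ : ℝ}
    (hI : I V ≤ ρ) : constrainedInf S D I ρ ≤ D V :=
  csInf_le (bddBelow_constrainedInf_set hbdd ρ) ⟨V, hV, hI, rfl⟩

theorem exists_nonpos_le_constrainedInf (hbdd : BddBelow (D '' S)) :
    ∃ m ≤ 0, ∀ ρ, m ≤ constrainedInf S D I ρ := by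
  obtain ⟨m, hm⟩ := hbdd
  refine ⟨min m 0, min_le_right _ _, fun ρ => Real.le_sInf ?_ (min_le_right _ _)⟩
  rintro _ ⟨V, hV, -, rfl⟩
  exact (min_le_left _ _).trans (hm ⟨V, hV, rfl⟩)

theorem antitoneOn_constrainedInf (hbdd : BddBelow (D '' S)) (hne : ∃ V ∈ S, I V ≤ 0) :
    AntitoneOn (constrainedInf S D I) (Ici 0) := by
  intro ρ₁ hρ₁ ρ₂ _ hρ
  obtain ⟨V, hV, hI⟩ := hne
  exact csInf_le_csInf (bddBelow_constrainedInf_set hbdd ρ₂) ⟨_, V, hV, hI.trans hρ₁, rfl⟩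
    fun _ ⟨V, hV, hI, hd⟩ => ⟨V, hV, hI.trans hρ, hd⟩

theorem convexOn_constrainedInf [AddCommGroup F] [Module ℝ F] (hD : ConvexOn ℝ S D)
    (hI : ConvexOn ℝ S I) (hbdd : BddBelow (D '' S)) (hne : ∃ V ∈ S, I V ≤ 0) :
    ConvexOn ℝ (Ici 0) (constrainedInf S D I) := by
  set C : Set (ℝ × F) := {p | p.2 ∈ S ∧ I p.2 ≤ p.1}
  have hC : Convex ℝ C := by
    rintro ⟨ρ₁, V₁⟩ ⟨hV₁, hI₁⟩ ⟨ρ₂, V₂⟩ ⟨hV₂, hI₂⟩ a b ha hb hab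
    refine ⟨hD.1 hV₁ hV₂ ha hb hab, (hI.2 hV₁ hV₂ ha hb hab).trans ?_⟩
    simp only [Prod.smul_mk, Prod.mk_add_mk, smul_eq_mul] at hI₁ hI₂ ⊢
    gcongr
  obtain ⟨V₀, hV₀, hI₀⟩ := hne
  refine ((hD.comp_linearMap (LinearMap.snd ℝ ℝ F)).subset (fun p hp => hp.1) hC |>.sInf_fiber
    (convex_Ici 0) (fun ρ hρ => ⟨V₀, hV₀, hI₀.trans hρ⟩) fun ρ _ => hbdd.mono ?_).congr
    fun ρ _ => ?_
  · rintro _ ⟨V, ⟨hV, -⟩, rfl⟩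
    exact ⟨V, hV, rfl⟩
  · simp only [constrainedInf, C, Function.comp, LinearMap.snd_apply, mem_ofPred_eq, and_assoc]

end ConstrainedInf

section Exponents

variable {X Y : Type} [Fintype X] [Fintype Y] {W : X → Y → ℝ} {P : X → ℝ} {lam : X × X → ℝ}

theorem IsChannel.wacc (hW : IsChannel W) : IsChannel (Wacc W) :=
  ⟨fun p => hW.1 p.1, fun p => hW.2 p.1⟩

theorem IsChannel.wrej (hW : IsChannel W) : IsChannel (Wrej W) :=
  ⟨fun p => hW.1 p.2, fun p => hW.2 p.2⟩

theorem EspP_eq_constrainedInf :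
    EspP W P = constrainedInf {V | IsChannel V} (fun V => condKL P V W) (mutInf P) :=
  rfl

theorem hTwo_eq_constrainedInf : hTwo W lam = constrainedInf {U | IsChannel U}
    (fun U => condKL lam U (Wrej W)) (fun U => condKL lam U (Wacc W)) :=
  rfl

theorem EspP_nonpos (hW : IsChannel W) (hP : ∀ x, 0 ≤ P x) {ρ : ℝ} (hρ : mutInf P W ≤ ρ) :
    EspP W P ρ ≤ 0 :=
  (constrainedInf_le (bddBelow_condKL_image hP hW) hW hρ).trans_eq (condKL_self P W)

theorem convexOn_perspective_EspP (hW : IsChannel W) (hP0 : ∀ x, 0 ≤ P x)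
    (hP1 : ∑ x, P x = 1) :
    ConvexOn ℝ (Ici 0 ×ˢ Ici 0) fun p : ℝ × ℝ => p.1 * EspP W P (p.2 / p.1) := by
  obtain ⟨x₀⟩ : Nonempty X := by
    by_contra h
    simp [not_nonempty_iff.1 h] at hP1
  have hne : ∃ V ∈ {V : X → Y → ℝ | IsChannel V}, mutInf P V ≤ 0 :=
    ⟨fun _ => W x₀, ⟨fun _ => hW.1 x₀, fun _ => hW.2 x₀⟩, (mutInf_const hP1 _).le⟩
  have hbdd := bddBelow_condKL_image hP0 hW
  rw [EspP_eq_constrainedInf]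
  exact (convexOn_constrainedInf
    ((convexOn_condKL hP0 W).subset (fun _ hV => hV.nonneg) convex_isChannel)
    ((convexOn_mutInf hP0).subset (fun _ hV => hV.nonneg) convex_isChannel) hbdd hne)
    |>.perspective_of_antitoneOn (antitoneOn_constrainedInf hbdd hne)

theorem convexOn_perspective_hTwo (hW : IsChannel W) (hl : ∀ p, 0 ≤ lam p) :
    ConvexOn ℝ (Ici 0 ×ˢ Ici 0) fun p : ℝ × ℝ => p.1 * hTwo W lam (p.2 / p.1) := by
  have hne : ∃ U ∈ {U : X × X → Y → ℝ | IsChannel U}, condKL lam U (Wacc W) ≤ 0 :=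
    ⟨Wacc W, hW.wacc, (condKL_self lam _).le⟩
  have hbdd := bddBelow_condKL_image hl hW.wrej
  rw [hTwo_eq_constrainedInf]
  exact (convexOn_constrainedInf
    ((convexOn_condKL hl _).subset (fun _ hU => hU.nonneg) convex_isChannel)
    ((convexOn_condKL hl _).subset (fun _ hU => hU.nonneg) convex_isChannel) hbdd hne)
    |>.perspective_of_antitoneOn (antitoneOn_constrainedInf hbdd hne)

end Exponents

section TwoPhase

variable {X Y : Type} [Fintype X] [Fintype Y] {W : X → Y → ℝ} {P : X → ℝ}
  {lam : X × X → ℝ} {R x : ℝ}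

/-- Points are `(α, R″, R′, T)`. -/
def twoPhaseFeasible (W : X → Y → ℝ) (P : X → ℝ) (R x : ℝ) : Set (ℝ × ℝ × ℝ × ℝ) :=
  {p | p.1 ∈ Icc 0 1 ∧ R ≤ p.2.2.1 ∧ p.2.2.1 ≤ p.2.1 ∧ 0 ≤ p.2.2.2 ∧
    p.1 * EspP W P (p.2.1 / p.1) + p.2.2.1 - R + p.2.2.2 ≤ x}

noncomputable def twoPhaseObjective (W : X → Y → ℝ) (lam : X × X → ℝ) (P : X → ℝ) (R : ℝ)
    (p : ℝ × ℝ × ℝ × ℝ) : ℝ :=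
  p.1 * EspP W P (p.2.2.1 / p.1) + p.2.1 - R + (1 - p.1) * hTwo W lam (p.2.2.2 / (1 - p.1))

theorem Efun_eq_sInf_twoPhase {α : ℝ} (hα : α ∈ Icc 0 1) :
    Efun W lam P R x α = sInf {v | ∃ y, (α, y) ∈ twoPhaseFeasible W P R x ∧
      v = twoPhaseObjective W lam P R (α, y)} := by
  unfold Efun
  congr 1
  ext v
  constructor
  · rintro ⟨R'', R', T, h₁, h₂, h₃, h₄, rfl⟩
    exact ⟨(R'', R', T), ⟨hα, h₁, h₂, h₃, h₄⟩, rfl⟩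
  · rintro ⟨⟨R'', R', T⟩, ⟨-, h₁, h₂, h₃, h₄⟩, rfl⟩
    exact ⟨R'', R', T, h₁, h₂, h₃, h₄, rfl⟩

theorem convex_twoPhaseFeasible (hW : IsChannel W) (hP0 : ∀ x, 0 ≤ P x)
    (hP1 : ∑ x, P x = 1) (hR : 0 ≤ R) : Convex ℝ (twoPhaseFeasible W P R x) := by
  rintro ⟨α₁, R''₁, R'₁, T₁⟩ ⟨hα₁, hR'₁, hR''₁, hT₁, hx₁⟩ ⟨α₂, R''₂, R'₂, T₂⟩
    ⟨hα₂, hR'₂, hR''₂, hT₂, hx₂⟩ a b ha hb hab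
  have hE := (convexOn_perspective_EspP hW hP0 hP1).2 (x := (α₁, R''₁))
    ⟨hα₁.1, by simp only [mem_Ici]; linarith⟩ (y := (α₂, R''₂))
    ⟨hα₂.1, by simp only [mem_Ici]; linarith⟩ ha hb hab
  simp only [Prod.smul_mk, Prod.mk_add_mk, smul_eq_mul] at hE
  dsimp only at hR'₁ hR''₁ hT₁ hx₁ hR'₂ hR''₂ hT₂ hx₂
  refine ⟨convex_Icc 0 1 hα₁ hα₂ ha hb hab, ?_, ?_, ?_, ?_⟩ <;>
    simp only [Prod.smul_mk, Prod.mk_add_mk, smul_eq_mul]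
  · linear_combination mul_le_mul_of_nonneg_left hR'₁ ha +
      mul_le_mul_of_nonneg_left hR'₂ hb - R * hab
  · linear_combination mul_le_mul_of_nonneg_left hR''₁ ha + mul_le_mul_of_nonneg_left hR''₂ hb
  · positivity
  · linear_combination hE + mul_le_mul_of_nonneg_left hx₁ ha +
      mul_le_mul_of_nonneg_left hx₂ hb + (R + x) * hab

theorem convexOn_twoPhaseObjective (hW : IsChannel W) (hP0 : ∀ x, 0 ≤ P x)
    (hP1 : ∑ x, P x = 1) (hl : ∀ p, 0 ≤ lam p) (hR : 0 ≤ R) :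
    ConvexOn ℝ (twoPhaseFeasible W P R x) (twoPhaseObjective W lam P R) := by
  refine ⟨convex_twoPhaseFeasible hW hP0 hP1 hR, ?_⟩
  rintro ⟨α₁, R''₁, R'₁, T₁⟩ ⟨hα₁, hR'₁, -, hT₁, -⟩ ⟨α₂, R''₂, R'₂, T₂⟩
    ⟨hα₂, hR'₂, -, hT₂, -⟩ a b ha hb hab
  have hE := (convexOn_perspective_EspP hW hP0 hP1).2 (x := (α₁, R'₁))
    ⟨hα₁.1, by simp only [mem_Ici]; linarith⟩ (y := (α₂, R'₂))
    ⟨hα₂.1, by simp only [mem_Ici]; linarith⟩ ha hb hab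
  have hH := (convexOn_perspective_hTwo hW hl).2 (x := (1 - α₁, T₁))
    ⟨sub_nonneg.2 hα₁.2, hT₁⟩ (y := (1 - α₂, T₂)) ⟨sub_nonneg.2 hα₂.2, hT₂⟩ ha hb hab
  simp only [Prod.smul_mk, Prod.mk_add_mk, smul_eq_mul] at hE hH
  rw [show a * (1 - α₁) + b * (1 - α₂) = 1 - (a * α₁ + b * α₂) by linear_combination hab] at hH
  simp only [twoPhaseObjective, Prod.smul_mk, Prod.mk_add_mk, smul_eq_mul]
  linear_combination hE + hH + R * hab

theorem exists_mem_twoPhaseFeasible (hW : IsChannel W) (hP : ∀ x, 0 ≤ P x) (hx : 0 ≤ x)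
    {α : ℝ} (hα : α ∈ Ioc 0 1) : ∃ y, (α, y) ∈ twoPhaseFeasible W P R x := by
  have hE : EspP W P (max R (α * mutInf P W) / α) ≤ 0 :=
    EspP_nonpos hW hP ((le_div_iff₀ hα.1).2 (by rw [mul_comm]; exact le_max_right _ _))
  refine ⟨(max R (α * mutInf P W), R, 0), ⟨hα.1.le, hα.2⟩, le_rfl, le_max_left _ _, le_rfl, ?_⟩
  linarith [mul_nonpos_of_nonneg_of_nonpos hα.1.le hE]

theorem bddBelow_twoPhaseObjective (hW : IsChannel W) (hP : ∀ x, 0 ≤ P x)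
    (hl : ∀ p, 0 ≤ lam p) (α : ℝ) : BddBelow {v | ∃ y, (α, y) ∈ twoPhaseFeasible W P R x ∧
      v = twoPhaseObjective W lam P R (α, y)} := by
  obtain ⟨m₁, hm₁, hE⟩ := exists_nonpos_le_constrainedInf (I := mutInf P)
    (bddBelow_condKL_image hP hW)
  obtain ⟨m₂, hm₂, hH⟩ := exists_nonpos_le_constrainedInf (I := fun U => condKL lam U (Wacc W))
    (bddBelow_condKL_image hl hW.wrej)
  refine ⟨m₁ + m₂, ?_⟩
  rintro _ ⟨⟨R'', R', T⟩, ⟨hα, hR', hR'', -, -⟩, rfl⟩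
  simp only [twoPhaseObjective]
  have hE' := mul_le_mul_of_nonneg_left (hE (R' / α)) hα.1
  have hH' := mul_le_mul_of_nonneg_left (hH (T / (1 - α))) (sub_nonneg.2 hα.2)
  rw [← EspP_eq_constrainedInf] at hE'
  rw [← hTwo_eq_constrainedInf] at hH'
  linarith [mul_nonpos_of_nonneg_of_nonpos (sub_nonneg.2 hα.2) hm₁,
    mul_nonpos_of_nonneg_of_nonpos hα.1 hm₂]

end TwoPhase

theorem Efun_convexOn_alpha_general {X Y : Type} [Fintype X] [Fintype Y]
    (W : X → Y → ℝ) (hW : IsChannel W)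
    (P : X → ℝ) (hP0 : ∀ a, 0 ≤ P a) (hP1 : ∑ a, P a = 1)
    (lam : X × X → ℝ) (hl0 : ∀ p, 0 ≤ lam p)
    (R x : ℝ) (hR : 0 ≤ R) (hx : 0 ≤ x)
    (αs : ℝ) (hαs : αs ∈ Set.Ioc (0 : ℝ) 1) :
    ConvexOn ℝ (Set.Icc αs 1) (fun α => Efun W lam P R x α) := by
  have hpos : ∀ α ∈ Icc αs 1, α ∈ Ioc 0 1 := fun α hα => ⟨hαs.1.trans_le hα.1, hα.2⟩
  refine ((convexOn_twoPhaseObjective hW hP0 hP1 hl0 hR).sInf_fiber (convex_Icc αs 1)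
    (fun α hα => exists_mem_twoPhaseFeasible hW hP0 hx (hpos α hα))
    (fun α _ => bddBelow_twoPhaseObjective hW hP0 hl0 α)).congr fun α hα => ?_
  exact (Efun_eq_sInf_twoPhase (Ioc_subset_Icc_self (hpos α hα))).symm

/-- for fixed `(R, x, P, λ)` with `E_r(R,P) ≥ x`, the map
`α ↦ E(R,x,α,P,λ)` is convex on `[α*, 1]`, where `α*` is the unique solution of
`α·E_r(R/α,P) = x` (with the convention `α* = R / I(P,W)` when `x = 0`). -/
theorem Efun_convexOn_alpha {X Y : Type} [Fintype X] [Fintype Y]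
    (W : X → Y → ℝ) (hW : IsChannel W)
    (P : X → ℝ) (hP0 : ∀ a, 0 ≤ P a) (hP1 : ∑ a, P a = 1)
    (lam : X × X → ℝ) (hl0 : ∀ p, 0 ≤ lam p) (hl1 : ∑ p, lam p = 1)
    (R x : ℝ) (hR : 0 ≤ R) (hx : 0 ≤ x)
    (hfeas : x ≤ ErP W P R)
    (αs : ℝ) (hαs : αs ∈ Set.Ioc (0 : ℝ) 1)
    (hsol : x ≠ 0 → αs * ErP W P (R / αs) = x)
    (hsol0 : x = 0 → αs = R / mutInf P W) :
    ConvexOn ℝ (Set.Icc αs 1) (fun α => Efun W lam P R x α) :=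
  Efun_convexOn_alpha_general W hW P hP0 hP1 lam hl0 R x hR hx αs hαs
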